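/- Let γ = (γ₁,γ₂,γ₃) : [a,b] → ℝ³ be a Euclidean C²-smooth regular curve and t ∈ [a,b] a point with ω(γ̇(t)) ≠ 0. Then the limit as L → +∞ of the curvature k^{L,∇¹}_γ(t) associated to the second Schouten–Van Kampen affine connection exists and equals |γ̇₁(t)| / (2|ω(γ̇(t))|). -/
import Mathlib


open Filter Real Topology

theorem curvature_limit_second_SvK_nonhorizontal
    (γ₁ γ₂ γ₃ ω : ℝ → ℝ) (k : ℝ → ℝ → ℝ) (a b t : ℝ)
    (ht : t ∈ Set.Icc a b)
    (hγ : ContDiffOn ℝ 2 (fun s => (γ₁ s, γ₂ s, γ₃ s)) (Set.Icc a b))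
    (hreg : ∀ s ∈ Set.Icc a b, ¬ (deriv γ₁ s = 0 ∧ deriv γ₂ s = 0 ∧ deriv γ₃ s = 0))
    (hω : ∀ s, ω s = deriv γ₃ s + (1/2) * (γ₂ s * deriv γ₁ s - γ₁ s * deriv γ₂ s))
    (hk : ∀ L s, k L s = Real.sqrt (((deriv (deriv γ₁) s)^2 + (deriv (deriv γ₂) s - L * ω s * deriv γ₁ s / 2)^2 + L * (deriv ω s + deriv γ₁ s * deriv γ₂ s / 2)^2) / ((deriv γ₁ s)^2 + (deriv γ₂ s)^2 + L * (ω s)^2)^2 - (deriv γ₁ s * deriv (deriv γ₁) s + deriv γ₂ s * (deriv (deriv γ₂) s - L * ω s * deriv γ₁ s / 2) + L * ω s * (deriv ω s + deriv γ₁ s * deriv γ₂ s / 2))^2 / ((deriv γ₁ s)^2 + (deriv γ₂ s)^2 + L * (ω s)^2)^3))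
    (h0 : ω t ≠ 0) :
    Filter.Tendsto (fun L => k L t) Filter.atTop
      (nhds (|deriv γ₁ t| / (2 * |ω t|))) := by
  set u := deriv γ₁ t with hu
  set v := deriv γ₂ t with hv
  set w := ω t with hw
  set A := deriv (deriv γ₁) t with hA
  set B := deriv (deriv γ₂) t with hB
  set C := deriv ω t with hC
  have hw2 : w ^ 2 ≠ 0 := pow_ne_zero 2 h0
  have hw2pos : (0:ℝ) < w ^ 2 := lt_of_le_of_ne (sq_nonneg w) (Ne.symm hw2)
  set H : ℝ → ℝ := fun x =>
    (A^2*x^2 + (B*x - w*u/2)^2 + (C + u*v/2)^2 * x) / ((u^2+v^2)*x + w^2)^2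
    - ((u*A+v*B)*x - v*w*u/2 + w*(C + u*v/2))^2 * x / ((u^2+v^2)*x + w^2)^3 with hH
  have hcont : ContinuousAt H 0 := by
    have hd : ((u^2+v^2)*(0:ℝ) + w^2) ≠ 0 := by simpa using hw2
    apply ContinuousAt.sub
    · exact ContinuousAt.div (by fun_prop) (by fun_prop) (pow_ne_zero 2 hd)
    · exact ContinuousAt.div (by fun_prop) (by fun_prop) (pow_ne_zero 3 hd)
  have key : Tendsto (fun L : ℝ => H L⁻¹) atTop (nhds (H 0)) :=
    hcont.tendsto.comp tendsto_inv_atTop_zero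
  have hH0 : Real.sqrt (H 0) = |u| / (2 * |w|) := by
    have : H 0 = (u / (2*w))^2 := by
      simp only [hH]
      field_simp
      ring
    rw [this, Real.sqrt_sq_eq_abs, abs_div, abs_mul, abs_two]
  have hlim := key.sqrt
  rw [hH0] at hlim
  apply hlim.congr'
  filter_upwards [eventually_gt_atTop (0:ℝ)] with L hL
  have hLne : L ≠ 0 := ne_of_gt hL
  have hN : u^2 + v^2 + L * w^2 ≠ 0 := by positivity
  have hD : (u^2+v^2) * L⁻¹ + w^2 ≠ 0 := by positivity
  rw [hk, ← hu, ← hv, ← hw, ← hA, ← hB, ← hC]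
  rw [hH]
  congr 1
  field_simp
  ring
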